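/- arXiv:2605.13917 — 5 statements merged into one kernel-verified Lean document; each statement's English description precedes it below -/
import Mathlib

section
/- Let G = (V, E⁺, E⁰) be a fuzzy graph with weight function ω, let k be a nonnegative integer, and let K be a clique in G⁽⁺⁾ with |K| ≥ k + 2. If 𝒞 is a clustering of G of cost at most k, then all vertices of N^∩_{G⁽⁺⁾}[K] := ⋂_{x ∈ K} (N⁺(x) ∪ {x}) lie in the same cluster of 𝒞. -/
open Finset

/-- A fuzzy graph: a finite vertex set with disjoint symmetric irreflexive sets of
'real' edges and 'fuzzy' edges; remaining pairs of distinct vertices are 'nonedges'. -/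
structure FuzzyGraph (V : Type*) where
  real : V → V → Bool
  fuzzy : V → V → Bool
  real_symm : ∀ u v, real u v = real v u
  fuzzy_symm : ∀ u v, fuzzy u v = fuzzy v u
  real_irrefl : ∀ v, real v v = false
  fuzzy_irrefl : ∀ v, fuzzy v v = false
  not_real_and_fuzzy : ∀ u v, ¬(real u v = true ∧ fuzzy u v = true)

namespace FuzzyGraph

variable {V : Type*}

/-- The pair `{u,v}` is a nonedge: distinct, neither a real nor a fuzzy edge. -/
def nonedge (G : FuzzyGraph V) (u v : V) : Prop :=
  u ≠ v ∧ ¬G.real u v ∧ ¬G.fuzzy u v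

instance (G : FuzzyGraph V) [DecidableEq V] (u v : V) : Decidable (G.nonedge u v) :=
  inferInstanceAs (Decidable (u ≠ v ∧ ¬G.real u v ∧ ¬G.fuzzy u v))

/-- The simple graph `G⁽⁺⁾` of real edges. -/
def plus (G : FuzzyGraph V) : SimpleGraph V where
  Adj u v := G.real u v
  symm := ⟨by intro u v h; rwa [G.real_symm] at h⟩
  loopless := ⟨by intro v h; rw [G.real_irrefl] at h; exact Bool.noConfusion h⟩

/-- The simple graph `G⁽⁰⁾` of fuzzy edges. -/
def zero (G : FuzzyGraph V) : SimpleGraph V where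
  Adj u v := G.fuzzy u v
  symm := ⟨by intro u v h; rwa [G.fuzzy_symm] at h⟩
  loopless := ⟨by intro v h; rw [G.fuzzy_irrefl] at h; exact Bool.noConfusion h⟩

variable [Fintype V] [DecidableEq V]

/-- The real neighborhood `N⁺(v)`. -/
def realNbrs (G : FuzzyGraph V) (v : V) : Finset V := univ.filter fun u => G.real v u

/-- The fuzzy neighborhood `N⁰(v)`. -/
def fuzzyNbrs (G : FuzzyGraph V) (v : V) : Finset V := univ.filter fun u => G.fuzzy v u

/-- The nonneighborhood `N⁻(v)`. -/
def nonNbrs (G : FuzzyGraph V) (v : V) : Finset V := univ.filter fun u => G.nonedge v u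

/-- The closed real neighborhood `N⁺[v]`. -/
def closedRealNbrs (G : FuzzyGraph V) (v : V) : Finset V := insert v (G.realNbrs v)

end FuzzyGraph

/-- `ω` is a valid weight function for `G`: symmetric nonnegative integer weights,
zero exactly on the fuzzy edges. -/
def IsWeight {V : Type*} [Fintype V] [DecidableEq V] (G : FuzzyGraph V) (ω : V → V → ℕ) : Prop :=
  (∀ u v, ω u v = ω v u) ∧ ∀ u v : V, u ≠ v → (ω u v = 0 ↔ G.fuzzy u v)

/-- The unit weight function: weight 1 on real edges and nonedges, 0 on fuzzy edges. -/
def unitW {V : Type*} (G : FuzzyGraph V) : V → V → ℕ := fun u v => if G.fuzzy u v then 0 else 1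

/-- Two vertices lie in a common cluster of the clustering `𝒞`. -/
def together {V : Type*} [Fintype V] [DecidableEq V] (𝒞 : Finpartition (univ : Finset V))
    (u v : V) : Prop :=
  ∃ C ∈ 𝒞.parts, u ∈ C ∧ v ∈ C

instance {V : Type*} [Fintype V] [DecidableEq V] (𝒞 : Finpartition (univ : Finset V)) (u v : V) :
    Decidable (together 𝒞 u v) :=
  inferInstanceAs (Decidable (∃ C ∈ 𝒞.parts, u ∈ C ∧ v ∈ C))

/-- The cost of a clustering: total weight of real edges between different clusters
plus total weight of nonedges inside clusters.  (Each unordered pair is counted twice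
in the sum over ordered pairs, whence the division by 2.) -/
def cost {V : Type*} [Fintype V] [DecidableEq V] (G : FuzzyGraph V) (ω : V → V → ℕ)
    (𝒞 : Finpartition (univ : Finset V)) : ℕ :=
  (∑ p ∈ univ.offDiag,
      ((if G.real p.1 p.2 ∧ ¬together 𝒞 p.1 p.2 then ω p.1 p.2 else 0) +
       (if G.nonedge p.1 p.2 ∧ together 𝒞 p.1 p.2 then ω p.1 p.2 else 0))) / 2

/-- A clique in `G⁽⁺⁾`: pairwise real-adjacent vertices. -/
def IsRealClique {V : Type*} (G : FuzzyGraph V) (K : Finset V) : Prop :=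
  ∀ u ∈ K, ∀ v ∈ K, u ≠ v → G.real u v

/-- A clique in `G⁽⁰⁾`: pairwise fuzzy-adjacent vertices. -/
def IsFuzzyClique {V : Type*} (G : FuzzyGraph V) (K : Finset V) : Prop :=
  ∀ u ∈ K, ∀ v ∈ K, u ≠ v → G.fuzzy u v

/-- A critical clique of `G⁽⁺⁾`: a clique with `⋂_{x ∈ K} N⁺[x] = ⋃_{x ∈ K} N⁺[x]`,
inclusion-wise maximal with this property. -/
def IsCriticalClique {V : Type*} [Fintype V] [DecidableEq V] (G : FuzzyGraph V)
    (K : Finset V) : Prop :=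
  IsRealClique G K ∧ K.inf (G.closedRealNbrs) = K.sup (G.closedRealNbrs) ∧
    ∀ K' : Finset V, K ⊆ K' → IsRealClique G K' →
      K'.inf (G.closedRealNbrs) = K'.sup (G.closedRealNbrs) → K' = K

/-- A simple graph is `c`-closed if every pair of distinct nonadjacent vertices has
fewer than `c` common neighbors. -/
def IsCClosed {V : Type*} (H : SimpleGraph V) (c : ℕ) : Prop :=
  ∀ u v : V, u ≠ v → ¬H.Adj u v → Set.ncard {w | H.Adj u w ∧ H.Adj v w} < c

/-- A fuzzy graph is fuzzy `c`-closed if its fuzzy edge graph `G⁽⁰⁾` is `c`-closed. -/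
def FuzzyCClosed {V : Type*} [Fintype V] [DecidableEq V] (G : FuzzyGraph V) (c : ℕ) : Prop :=
  ∀ u v : V, u ≠ v → ¬G.fuzzy u v → ((G.fuzzyNbrs u) ∩ (G.fuzzyNbrs v)).card < c

/-! If `w₁` and `w₂` were in different clusters, every `x ∈ K` would be separated from one of
them, say `f x`. Each pair `{x, f x}` is a real edge of positive weight cut by the clustering, and the
ordered pairs `(x, f x)`, `(f x, x)` for `x ∈ K` number at least `2|K| - 2 ≥ 2k + 2`: two of them can
coincide only when both endpoints lie in `{w₁, w₂}`. Since the cost counts each ordered pair with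
half its weight, it would be at least `k + 1`. -/

section Together

variable {V : Type*} [Fintype V] [DecidableEq V] {𝒞 : Finpartition (univ : Finset V)}

theorem together_refl (𝒞 : Finpartition (univ : Finset V)) (v : V) : together 𝒞 v v := by
  obtain ⟨C, hC, hv⟩ := 𝒞.exists_mem (mem_univ v)
  exact ⟨C, hC, hv, hv⟩

theorem together_symm {u v : V} : together 𝒞 u v → together 𝒞 v u := by
  rintro ⟨C, hC, hu, hv⟩
  exact ⟨C, hC, hv, hu⟩

theorem together_trans {u v w : V} : together 𝒞 u v → together 𝒞 v w → together 𝒞 u w := by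
  rintro ⟨C, hC, hu, hv⟩ ⟨D, hD, hv', hw⟩
  obtain rfl := 𝒞.eq_of_mem_parts hC hD hv hv'
  exact ⟨C, hC, hu, hw⟩

theorem ne_of_not_together {u v : V} (h : ¬together 𝒞 u v) : u ≠ v := by
  rintro rfl
  exact h (together_refl 𝒞 u)

end Together

namespace FuzzyGraph

variable {V : Type*} {G : FuzzyGraph V}

theorem ne_of_real {u v : V} (h : G.real u v) : u ≠ v := by
  rintro rfl
  simp [G.real_irrefl] at h

variable [Fintype V] [DecidableEq V]

theorem real_of_mem_closedRealNbrs {u v : V} (h : v ∈ G.closedRealNbrs u) (huv : u ≠ v) :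
    G.real u v := by
  simpa [closedRealNbrs, realNbrs, huv.symm] using h

theorem one_le_weight_of_real {ω : V → V → ℕ} (hω : IsWeight G ω) {u v : V} (h : G.real u v) :
    1 ≤ ω u v := by
  refine Nat.one_le_iff_ne_zero.2 fun h0 => G.not_real_and_fuzzy u v ⟨h, ?_⟩
  exact (hω.2 u v (ne_of_real h)).1 h0

end FuzzyGraph

theorem card_div_two_le_cost {V : Type*} [Fintype V] [DecidableEq V] {G : FuzzyGraph V}
    {ω : V → V → ℕ} (hω : IsWeight G ω) (𝒞 : Finpartition (univ : Finset V))
    {S : Finset (V × V)} (hS : ∀ p ∈ S, G.real p.1 p.2 ∧ ¬together 𝒞 p.1 p.2) :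
    #S / 2 ≤ cost G ω 𝒞 := by
  refine Nat.div_le_div_right ?_
  have hS_offDiag : S ⊆ univ.offDiag := fun p hp => by
    simpa using FuzzyGraph.ne_of_real (hS p hp).1
  calc #S = ∑ _p ∈ S, 1 := card_eq_sum_ones S
    _ ≤ ∑ p ∈ S, ((if G.real p.1 p.2 ∧ ¬together 𝒞 p.1 p.2 then ω p.1 p.2 else 0) +
          (if G.nonedge p.1 p.2 ∧ together 𝒞 p.1 p.2 then ω p.1 p.2 else 0)) := by
        refine sum_le_sum fun p hp => ?_
        rw [if_pos (hS p hp)]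
        exact le_add_right (FuzzyGraph.one_le_weight_of_real hω (hS p hp).1)
    _ ≤ _ := sum_le_sum_of_subset hS_offDiag

theorem two_mul_card_le_card_pairs_add_card {α : Type*} [DecidableEq α] {K W : Finset α}
    {f : α → α} (hf : ∀ x ∈ K, f x ∈ W) :
    2 * #K ≤ #(K.image (fun x => (x, f x)) ∪ K.image (fun x => (f x, x))) + #W := by
  have hcard₁ : #(K.image fun x => (x, f x)) = #K :=
    card_image_of_injective _ fun a b hab => congrArg Prod.fst hab
  have hcard₂ : #(K.image fun x => (f x, x)) = #K :=
    card_image_of_injective _ fun a b hab => congrArg Prod.snd hab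
  have hinter : K.image (fun x => (x, f x)) ∩ K.image (fun x => (f x, x)) ⊆
      W.image fun z => (z, f z) := by
    intro p hp
    obtain ⟨⟨x, -, rfl⟩, ⟨y, hy, hxy⟩⟩ := And.imp mem_image.1 mem_image.1 (mem_inter.1 hp)
    obtain ⟨rfl, -⟩ := Prod.ext_iff.1 hxy
    exact mem_image.2 ⟨f y, hf y hy, rfl⟩
  have := card_union_add_card_inter (K.image fun x => (x, f x)) (K.image fun x => (f x, x))
  have := (card_le_card hinter).trans card_image_le
  omega

theorem stmt1_general {V : Type*} [Fintype V] [DecidableEq V]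
    (G : FuzzyGraph V) (ω : V → V → ℕ) (hω : IsWeight G ω) (k : ℕ)
    (K : Finset V) (hsize : k + 2 ≤ K.card)
    (𝒞 : Finpartition (Finset.univ : Finset V)) (hcost : cost G ω 𝒞 ≤ k)
    (w₁ w₂ : V) (h₁ : ∀ x ∈ K, w₁ ∈ G.closedRealNbrs x) (h₂ : ∀ x ∈ K, w₂ ∈ G.closedRealNbrs x) :
    together 𝒞 w₁ w₂ := by
  by_contra hsep
  set f : V → V := fun x => if together 𝒞 x w₁ then w₂ else w₁
  have hf_mem : ∀ x ∈ K, f x ∈ ({w₁, w₂} : Finset V) := fun x _ => by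
    by_cases h : together 𝒞 x w₁ <;> simp [f, h]
  have hf_cut : ∀ x ∈ K, G.real x (f x) ∧ ¬together 𝒞 x (f x) := fun x hx => by
    by_cases h : together 𝒞 x w₁
    · have hsep' : ¬together 𝒞 x w₂ := fun h' => hsep (together_trans (together_symm h) h')
      simp only [f, if_pos h]
      exact ⟨FuzzyGraph.real_of_mem_closedRealNbrs (h₂ x hx) (ne_of_not_together hsep'), hsep'⟩
    · simp only [f, if_neg h]
      exact ⟨FuzzyGraph.real_of_mem_closedRealNbrs (h₁ x hx) (ne_of_not_together h), h⟩
  set S := K.image (fun x => (x, f x)) ∪ K.image (fun x => (f x, x))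
  have hS_cut : ∀ p ∈ S, G.real p.1 p.2 ∧ ¬together 𝒞 p.1 p.2 := by
    simp only [S, mem_union, mem_image]
    rintro _ (⟨x, hx, rfl⟩ | ⟨x, hx, rfl⟩)
    · exact hf_cut x hx
    · exact ⟨by rw [G.real_symm]; exact (hf_cut x hx).1,
        fun h => (hf_cut x hx).2 (together_symm h)⟩
  have hS_card : 2 * #K ≤ #S + 2 :=
    (two_mul_card_le_card_pairs_add_card hf_mem).trans (by gcongr; exact card_le_two)
  have hcost_ge : #S / 2 ≤ cost G ω 𝒞 := card_div_two_le_cost hω 𝒞 hS_cut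
  omega

/-- If `K` is a real clique with `|K| ≥ k + 2` and `𝒞` a clustering of cost
at most `k`, then all vertices of `⋂_{x ∈ K} N⁺[x]` lie in the same cluster of `𝒞`. -/
theorem stmt1 {V : Type*} [Fintype V] [DecidableEq V]
    (G : FuzzyGraph V) (ω : V → V → ℕ) (hω : IsWeight G ω) (k : ℕ)
    (K : Finset V) (hK : IsRealClique G K) (hsize : k + 2 ≤ K.card)
    (𝒞 : Finpartition (Finset.univ : Finset V)) (hcost : cost G ω 𝒞 ≤ k)
    (w₁ w₂ : V) (h₁ : ∀ x ∈ K, w₁ ∈ G.closedRealNbrs x) (h₂ : ∀ x ∈ K, w₂ ∈ G.closedRealNbrs x) :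
    together 𝒞 w₁ w₂ :=
  stmt1_general G ω hω k K hsize 𝒞 hcost w₁ w₂ h₁ h₂
end

section
/- Let G = (V, E⁺, E⁰) be a fuzzy graph with weight function ω. For every clustering 𝒞 of G there exists a clustering 𝒞' of G with cost(𝒞') ≤ cost(𝒞) such that every cluster of 𝒞' induces a connected subgraph of G⁽⁺⁾. In particular, there is an optimal clustering in which every cluster is connected in G⁽⁺⁾. -/
open Finset

/-!
Refine a clustering by splitting each cluster into the connected components of the real edges
inside it. A real edge that lay inside a cluster stays inside a component, and two vertices that
were in different clusters remain separated, so no term of the cost grows. Since there are only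
finitely many clusterings, refining an optimal one gives an optimal clustering with connected
clusters.
-/

namespace FuzzyGraph

variable {V : Type*} [Fintype V] [DecidableEq V]

lemma together_iff_part_eq (𝒞 : Finpartition (univ : Finset V)) {u v : V} :
    together 𝒞 u v ↔ 𝒞.part u = 𝒞.part v := by
  constructor
  · rintro ⟨C, hC, hu, hv⟩
    rw [𝒞.part_eq_of_mem hC hu, 𝒞.part_eq_of_mem hC hv]
  · intro h
    refine ⟨𝒞.part u, 𝒞.part_mem.2 (mem_univ u), 𝒞.mem_part (mem_univ u), ?_⟩
    exact h ▸ 𝒞.mem_part (mem_univ v)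

lemma together_ofSetoid_iff (s : Setoid V) [DecidableRel s.r] {u v : V} :
    together (Finpartition.ofSetoid s) u v ↔ s u v := by
  rw [together_iff_part_eq, ← Finpartition.mem_part_ofSetoid_iff_rel]
  set P := Finpartition.ofSetoid s
  exact ⟨fun h => h ▸ P.mem_part (mem_univ v),
    fun h => (P.part_eq_of_mem (P.part_mem.2 (mem_univ u)) h).symm⟩

lemma together_of_reachable (𝒞 : Finpartition (univ : Finset V)) {H : SimpleGraph V}
    (hH : ∀ u v, H.Adj u v → together 𝒞 u v) {u v : V} (h : H.Reachable u v) :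
    together 𝒞 u v := by
  rw [SimpleGraph.reachable_iff_reflTransGen] at h
  rw [together_iff_part_eq]
  simpa [Relation.reflTransGen_eq_self] using
    h.lift 𝒞.part (p := Eq) fun a b hab => (together_iff_part_eq 𝒞).1 (hH a b hab)

lemma cost_le_cost_of_together_imp (G : FuzzyGraph V) (ω : V → V → ℕ)
    {𝒞 𝒞' : Finpartition (univ : Finset V)}
    (h_sub : ∀ u v, together 𝒞' u v → together 𝒞 u v)
    (h_real : ∀ u v, G.real u v → together 𝒞 u v → together 𝒞' u v) :
    cost G ω 𝒞' ≤ cost G ω 𝒞 := by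
  unfold cost
  gcongr
  · split_ifs <;> grind
  · split_ifs <;> grind

lemma connected_induce_of_mem_parts_ofSetoid {H K : SimpleGraph V}
    [DecidableRel H.reachableSetoid] (hHK : H ≤ K) {C : Finset V}
    (hC : C ∈ (Finpartition.ofSetoid H.reachableSetoid).parts) :
    (K.induce (C : Set V)).Connected := by
  obtain ⟨v, hv⟩ := Finpartition.nonempty_of_mem_parts _ hC
  have hC_supp : (C : Set V) = (H.connectedComponentMk v).supp := by
    ext w
    rw [Finset.mem_coe, ← Finpartition.part_eq_of_mem _ hC hv,
      Finpartition.mem_part_ofSetoid_iff_rel, SimpleGraph.ConnectedComponent.mem_supp_iff,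
      SimpleGraph.ConnectedComponent.eq]
    exact SimpleGraph.reachable_comm
  rw [hC_supp]
  exact (H.connectedComponentMk v).connected_toSimpleGraph.mono (SimpleGraph.comap_monotone _ hHK)

def sameClusterGraph (𝒞 : Finpartition (univ : Finset V)) : SimpleGraph V where
  Adj u v := u ≠ v ∧ together 𝒞 u v
  symm := ⟨fun _ _ ⟨hne, C, hC, hu, hv⟩ => ⟨hne.symm, C, hC, hv, hu⟩⟩
  loopless := ⟨fun _ h => h.1 rfl⟩

lemma sameClusterGraph_adj (𝒞 : Finpartition (univ : Finset V)) {u v : V} :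
    (sameClusterGraph 𝒞).Adj u v ↔ u ≠ v ∧ together 𝒞 u v :=
  Iff.rfl

open Classical in
noncomputable def refineByComponents (K : SimpleGraph V) (𝒞 : Finpartition (univ : Finset V)) :
    Finpartition (univ : Finset V) :=
  Finpartition.ofSetoid (K ⊓ sameClusterGraph 𝒞).reachableSetoid

section refineByComponents

variable (K : SimpleGraph V) (𝒞 : Finpartition (univ : Finset V))

open Classical in
lemma together_refineByComponents_iff {u v : V} :
    together (refineByComponents K 𝒞) u v ↔ (K ⊓ sameClusterGraph 𝒞).Reachable u v :=
  together_ofSetoid_iff _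

lemma together_of_together_refineByComponents {u v : V}
    (h : together (refineByComponents K 𝒞) u v) : together 𝒞 u v :=
  together_of_reachable 𝒞 (fun _ _ (hab : (K ⊓ sameClusterGraph 𝒞).Adj _ _) => hab.2.2)
    ((together_refineByComponents_iff K 𝒞).1 h)

lemma together_refineByComponents_of_adj {u v : V} (hadj : K.Adj u v) (h : together 𝒞 u v) :
    together (refineByComponents K 𝒞) u v :=
  (together_refineByComponents_iff K 𝒞).2
    (SimpleGraph.Adj.reachable ⟨hadj, (sameClusterGraph_adj 𝒞).2 ⟨hadj.ne, h⟩⟩)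

open Classical in
lemma connected_induce_of_mem_parts_refineByComponents {C : Finset V}
    (hC : C ∈ (refineByComponents K 𝒞).parts) : (K.induce (C : Set V)).Connected :=
  connected_induce_of_mem_parts_ofSetoid inf_le_left hC

lemma cost_refineByComponents_le (G : FuzzyGraph V) (ω : V → V → ℕ) :
    cost G ω (refineByComponents G.plus 𝒞) ≤ cost G ω 𝒞 :=
  cost_le_cost_of_together_imp G ω (fun _ _ => together_of_together_refineByComponents G.plus 𝒞)
    (fun _ _ => together_refineByComponents_of_adj G.plus 𝒞)

end refineByComponents

end FuzzyGraph

theorem stmt3_general {V : Type*} [Fintype V] [DecidableEq V]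
    (G : FuzzyGraph V) (ω : V → V → ℕ) :
    (∀ 𝒞 : Finpartition (Finset.univ : Finset V),
      ∃ 𝒞' : Finpartition (Finset.univ : Finset V), cost G ω 𝒞' ≤ cost G ω 𝒞 ∧
        ∀ C ∈ 𝒞'.parts, (SimpleGraph.induce (↑C : Set V) G.plus).Connected) ∧
    (∃ 𝒞' : Finpartition (Finset.univ : Finset V),
      (∀ 𝒟 : Finpartition (Finset.univ : Finset V), cost G ω 𝒞' ≤ cost G ω 𝒟) ∧
        ∀ C ∈ 𝒞'.parts, (SimpleGraph.induce (↑C : Set V) G.plus).Connected) := by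
  have exists_connected_le : ∀ 𝒞 : Finpartition (Finset.univ : Finset V),
      ∃ 𝒞' : Finpartition (Finset.univ : Finset V), cost G ω 𝒞' ≤ cost G ω 𝒞 ∧
        ∀ C ∈ 𝒞'.parts, (SimpleGraph.induce (↑C : Set V) G.plus).Connected :=
    fun 𝒞 => ⟨FuzzyGraph.refineByComponents G.plus 𝒞,
      FuzzyGraph.cost_refineByComponents_le 𝒞 G ω,
      fun _ hC => FuzzyGraph.connected_induce_of_mem_parts_refineByComponents G.plus 𝒞 hC⟩
  refine ⟨exists_connected_le, ?_⟩
  obtain ⟨𝒟, h𝒟⟩ := Finite.exists_min (cost G ω)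
  obtain ⟨𝒞', hle, hconn⟩ := exists_connected_le 𝒟
  exact ⟨𝒞', fun 𝒟' => hle.trans (h𝒟 𝒟'), hconn⟩

/-- For every clustering there is one of no larger cost whose clusters all
induce connected subgraphs of `G⁽⁺⁾`; in particular there is an optimal clustering all of
whose clusters are connected in `G⁽⁺⁾`. -/
theorem stmt3 {V : Type*} [Fintype V] [DecidableEq V]
    (G : FuzzyGraph V) (ω : V → V → ℕ) (hω : IsWeight G ω) :
    (∀ 𝒞 : Finpartition (Finset.univ : Finset V),
      ∃ 𝒞' : Finpartition (Finset.univ : Finset V), cost G ω 𝒞' ≤ cost G ω 𝒞 ∧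
        ∀ C ∈ 𝒞'.parts, (SimpleGraph.induce (↑C : Set V) G.plus).Connected) ∧
    (∃ 𝒞' : Finpartition (Finset.univ : Finset V),
      (∀ 𝒟 : Finpartition (Finset.univ : Finset V), cost G ω 𝒞' ≤ cost G ω 𝒟) ∧
        ∀ C ∈ 𝒞'.parts, (SimpleGraph.induce (↑C : Set V) G.plus).Connected) :=
  stmt3_general G ω
end

section
/- Let G = (V, E⁺, E⁰) be a fuzzy graph with weight function ω that is fuzzy c-closed, and let k ≥ 1, c ≥ 1 be integers. Assume: (i) every vertex of V has fewer than c fuzzy neighbors or at most 2kc real neighbors; (ii) there is no pair of distinct vertices u, v with {u,v} ∈ E⁻ and |N⁺(u) ∩ N⁺(v)| > k; (iii) there is no fuzzy edge {u,v} ∈ E⁰ with |N⁰(u) ∩ N⁰(v)| < c and |N⁺(u) ∩ N⁺(v)| > k. Let V₊ be the set of vertices with fewer than c fuzzy neighbors and V₀ = V \ V₊. If 𝒞 is a clustering of G of cost at most k and C ∈ 𝒞 is a cluster with |C| > 4kc + k + c + 2, then C ∩ V₀ is a clique in G⁽⁰⁾ (pairwise fuzzy edges) and C ∩ V₊ is a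 clique in G⁽⁺⁾ (pairwise real edges). -/
open Finset

/-! Nonedges cost at least one each, so a cluster of a clustering of cost at most `k` contains at
most `k` nonedges; hence any two of its vertices together have at most `k + 1` non-neighbours
in it. If two vertices `u, v` of a large cluster `C` violated the claim, every other vertex of
`C` would be a non-neighbour of `u` or `v`, or lie in one of a few neighbourhoods that the
hypotheses keep small: for `u, v ∈ V₀` without a fuzzy edge these are `N⁺(u)`, `N⁺(v)` (of size
at most `2kc`) and `N⁰(u) ∩ N⁰(v)` (of size less than `c` by fuzzy `c`-closure); for
`u, v ∈ V₊` without a real edge they are `N⁰(u)`, `N⁰(v)` (of size less than `c`) and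
`N⁺(u) ∩ N⁺(v)` (of size at most `k` by (ii) or (iii)). Either way `C` is too small. -/

theorem Finset.card_le_of_cover {α : Type*} [DecidableEq α] {A B D : α → Finset α}
    {C : Finset α} {u v : α}
    (hcover : ∀ x, ∀ w ∈ C, w ≠ x → w ∈ A x ∨ w ∈ B x ∨ w ∈ D x) (huv : v ∉ B u) :
    #C ≤ 1 + #(A u) + #(A v) + #(B u ∩ B v) + #(D u) + #(D v) := by
  have hsub : C ⊆ insert u (A u ∪ A v ∪ (B u ∩ B v) ∪ D u ∪ D v) := by
    intro w hw
    by_cases hwu : w = u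
    · simp [hwu]
    rcases hcover u w hw hwu with h | h | h
    · simp [h]
    · have hwv : w ≠ v := by rintro rfl; exact huv h
      rcases hcover v w hw hwv with h' | h' | h' <;> simp [h, h']
    · simp [h]
  have := card_le_card hsub
  have := card_insert_le u (A u ∪ A v ∪ (B u ∩ B v) ∪ D u ∪ D v)
  have := card_union_le (A u ∪ A v ∪ (B u ∩ B v) ∪ D u) (D v)
  have := card_union_le (A u ∪ A v ∪ (B u ∩ B v)) (D u)
  have := card_union_le (A u ∪ A v) (B u ∩ B v)
  have := card_union_le (A u) (A v)
  omega

namespace FuzzyGraph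

variable {V : Type*} (G : FuzzyGraph V)

theorem nonedge_comm (u v : V) : G.nonedge u v ↔ G.nonedge v u := by
  simp only [nonedge, ne_comm, G.real_symm u v, G.fuzzy_symm u v]

theorem real_or_fuzzy_or_nonedge {u w : V} (h : u ≠ w) :
    G.real u w ∨ G.fuzzy u w ∨ G.nonedge u w := by
  unfold nonedge
  tauto

variable [Fintype V]

@[simp]
theorem mem_realNbrs {u w : V} : w ∈ G.realNbrs u ↔ G.real u w := by
  simp [realNbrs]

@[simp]
theorem mem_fuzzyNbrs {u w : V} : w ∈ G.fuzzyNbrs u ↔ G.fuzzy u w := by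
  simp [fuzzyNbrs]

variable [DecidableEq V]

@[simp]
theorem mem_nonNbrs {u w : V} : w ∈ G.nonNbrs u ↔ G.nonedge u w := by
  simp [nonNbrs]

theorem mem_realNbrs_or_mem_fuzzyNbrs_or_mem_inter_nonNbrs {C : Finset V} {u w : V}
    (hw : w ∈ C) (hwu : w ≠ u) :
    w ∈ G.realNbrs u ∨ w ∈ G.fuzzyNbrs u ∨ w ∈ C ∩ G.nonNbrs u := by
  simpa [hw] using G.real_or_fuzzy_or_nonedge (Ne.symm hwu)

theorem card_le_of_not_fuzzy (C : Finset V) {u v : V} (huv : ¬G.fuzzy u v) :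
    #C ≤ 1 + #(G.realNbrs u) + #(G.realNbrs v) + #(G.fuzzyNbrs u ∩ G.fuzzyNbrs v) +
      #(C ∩ G.nonNbrs u) + #(C ∩ G.nonNbrs v) :=
  card_le_of_cover (fun _ _ hw hwx => G.mem_realNbrs_or_mem_fuzzyNbrs_or_mem_inter_nonNbrs hw hwx)
    (by simpa using huv)

theorem card_le_of_not_real (C : Finset V) {u v : V} (huv : ¬G.real u v) :
    #C ≤ 1 + #(G.fuzzyNbrs u) + #(G.fuzzyNbrs v) + #(G.realNbrs u ∩ G.realNbrs v) +
      #(C ∩ G.nonNbrs u) + #(C ∩ G.nonNbrs v) :=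
  card_le_of_cover (A := G.fuzzyNbrs) (B := G.realNbrs) (D := fun x => C ∩ G.nonNbrs x)
    (fun _ _ hw hwx => by
      have := G.mem_realNbrs_or_mem_fuzzyNbrs_or_mem_inter_nonNbrs hw hwx
      tauto)
    (by simpa using huv)

theorem two_mul_card_nonNbrs_add_le {C : Finset V} {u v : V} (hu : u ∈ C) (hv : v ∈ C)
    (huv : u ≠ v) :
    2 * (#(C ∩ G.nonNbrs u) + #(C ∩ G.nonNbrs v)) ≤
      #{p ∈ C ×ˢ C | G.nonedge p.1 p.2} + 2 := by
  set Du := C ∩ G.nonNbrs u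
  set Dv := C ∩ G.nonNbrs v
  set outgoing := {u} ×ˢ Du ∪ {v} ×ˢ Dv
  set incoming := Du ×ˢ {u} ∪ Dv ×ˢ {v}
  -- A nonedge pair is both outgoing and incoming only if it is `(u, v)` or `(v, u)`.
  have hout : #outgoing = #Du + #Dv := by
    rw [card_union_of_disjoint (disjoint_product.2 (Or.inl (disjoint_singleton.2 huv)))]
    simp
  have hin : #incoming = #Du + #Dv := by
    rw [card_union_of_disjoint (disjoint_product.2 (Or.inr (disjoint_singleton.2 huv)))]
    simp
  have hsub : outgoing ∪ incoming ⊆ {p ∈ C ×ˢ C | G.nonedge p.1 p.2} := by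
    rintro ⟨a, b⟩ h
    simp only [outgoing, incoming, Du, Dv, mem_union, mem_product, mem_singleton, mem_inter,
      mem_nonNbrs] at h
    simp only [mem_filter, mem_product]
    rcases h with (⟨rfl, hb, h⟩ | ⟨rfl, hb, h⟩) | (⟨⟨ha, h⟩, rfl⟩ | ⟨⟨ha, h⟩, rfl⟩) <;>
      simp_all [G.nonedge_comm a b]
  have hinter : outgoing ∩ incoming ⊆ {(u, v), (v, u)} := by
    rintro ⟨a, b⟩ h
    simp only [outgoing, incoming, Du, Dv, mem_inter, mem_union, mem_product, mem_singleton,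
      mem_nonNbrs] at h
    obtain ⟨(⟨rfl, -, h⟩ | ⟨rfl, -, h⟩), (⟨-, rfl⟩ | ⟨-, rfl⟩)⟩ := h <;>
      simp_all [nonedge]
  have := card_union_add_card_inter outgoing incoming
  have := card_le_card hsub
  have := (card_le_card hinter).trans card_le_two
  omega

theorem card_nonedge_pairs_le_cost {ω : V → V → ℕ} (hω : IsWeight G ω)
    {𝒞 : Finpartition (univ : Finset V)} {C : Finset V} (hC : C ∈ 𝒞.parts) :
    #{p ∈ C ×ˢ C | G.nonedge p.1 p.2} ≤ 2 * cost G ω 𝒞 + 1 := by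
  set f : V × V → ℕ := fun p =>
    (if G.real p.1 p.2 ∧ ¬together 𝒞 p.1 p.2 then ω p.1 p.2 else 0) +
      (if G.nonedge p.1 p.2 ∧ together 𝒞 p.1 p.2 then ω p.1 p.2 else 0)
  set P := {p ∈ C ×ˢ C | G.nonedge p.1 p.2}
  have hone : ∀ p ∈ P, 1 ≤ f p := by
    intro p hp
    simp only [P, mem_filter, mem_product] at hp
    have hω0 : ω p.1 p.2 ≠ 0 := fun h0 => hp.2.2.2 ((hω.2 _ _ hp.2.1).1 h0)
    have htog : together 𝒞 p.1 p.2 := ⟨C, hC, hp.1⟩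
    simp only [f, if_pos (And.intro hp.2 htog)]
    omega
  have hsub : P ⊆ univ.offDiag := fun p hp => by
    simpa using (mem_filter.1 hp).2.1
  have hsum : #P ≤ ∑ p ∈ univ.offDiag, f p :=
    calc #P ≤ ∑ p ∈ P, f p := by simpa using card_nsmul_le_sum P f 1 hone
      _ ≤ ∑ p ∈ univ.offDiag, f p := sum_le_sum_of_subset hsub
  have : cost G ω 𝒞 = (∑ p ∈ univ.offDiag, f p) / 2 := rfl
  omega

theorem card_nonNbrs_add_le_cost {ω : V → V → ℕ} (hω : IsWeight G ω)
    {𝒞 : Finpartition (univ : Finset V)} {C : Finset V} (hC : C ∈ 𝒞.parts) {u v : V}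
    (hu : u ∈ C) (hv : v ∈ C) (huv : u ≠ v) :
    #(C ∩ G.nonNbrs u) + #(C ∩ G.nonNbrs v) ≤ cost G ω 𝒞 + 1 := by
  have := G.two_mul_card_nonNbrs_add_le hu hv huv
  have := G.card_nonedge_pairs_le_cost hω hC
  omega

theorem isFuzzyClique_filter_of_card_lt {c d m : ℕ} (hcl : FuzzyCClosed G c)
    (hdeg : ∀ v, #(G.fuzzyNbrs v) < c ∨ #(G.realNbrs v) ≤ d) {C : Finset V}
    (hD : ∀ u ∈ C, ∀ v ∈ C, u ≠ v → #(C ∩ G.nonNbrs u) + #(C ∩ G.nonNbrs v) ≤ m)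
    (hC : 2 * d + c + m < #C) :
    IsFuzzyClique G {v ∈ C | ¬#(G.fuzzyNbrs v) < c} := by
  intro u hu v hv huv
  rw [mem_filter] at hu hv
  by_contra h
  have := G.card_le_of_not_fuzzy C h
  have := hcl u v huv h
  have := (hdeg u).resolve_left hu.2
  have := (hdeg v).resolve_left hv.2
  have := hD u hu.1 v hv.1 huv
  omega

theorem isRealClique_filter_of_card_le {c k m : ℕ}
    (h2 : ∀ u v, G.nonedge u v → #(G.realNbrs u ∩ G.realNbrs v) ≤ k)
    (h3 : ∀ u v, G.fuzzy u v → #(G.fuzzyNbrs u ∩ G.fuzzyNbrs v) < c →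
      #(G.realNbrs u ∩ G.realNbrs v) ≤ k) {C : Finset V}
    (hD : ∀ u ∈ C, ∀ v ∈ C, u ≠ v → #(C ∩ G.nonNbrs u) + #(C ∩ G.nonNbrs v) ≤ m)
    (hC : 2 * c + k + m ≤ #C) :
    IsRealClique G {v ∈ C | #(G.fuzzyNbrs v) < c} := by
  intro u hu v hv huv
  rw [mem_filter] at hu hv
  by_contra h
  have hcommon : #(G.realNbrs u ∩ G.realNbrs v) ≤ k := by
    rcases G.real_or_fuzzy_or_nonedge huv with hr | hf | hn
    · exact absurd hr h
    · exact h3 u v hf ((card_le_card inter_subset_left).trans_lt hu.2)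
    · exact h2 u v hn
  have := G.card_le_of_not_real C h
  have := hD u hu.1 v hv.1 huv
  omega

end FuzzyGraph

/-- Under the stated reducedness conditions on a fuzzy `c`-closed graph, in
any cluster `C` of size more than `4kc + k + c + 2` of a clustering of cost at most `k`,
`C ∩ V₀` is a fuzzy clique and `C ∩ V₊` is a real clique, where `V₊` is the set of vertices
with fewer than `c` fuzzy neighbors and `V₀ = V \ V₊`. -/
theorem stmt10 {V : Type*} [Fintype V] [DecidableEq V]
    (G : FuzzyGraph V) (ω : V → V → ℕ) (hω : IsWeight G ω) (c k : ℕ) (hk : 1 ≤ k) (hc : 1 ≤ c)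
    (hcl : FuzzyCClosed G c)
    (h1 : ∀ v : V, (G.fuzzyNbrs v).card < c ∨ (G.realNbrs v).card ≤ 2 * k * c)
    (h2 : ∀ u v : V, G.nonedge u v → ((G.realNbrs u) ∩ (G.realNbrs v)).card ≤ k)
    (h3 : ∀ u v : V, G.fuzzy u v → ((G.fuzzyNbrs u) ∩ (G.fuzzyNbrs v)).card < c →
      ((G.realNbrs u) ∩ (G.realNbrs v)).card ≤ k)
    (𝒞 : Finpartition (Finset.univ : Finset V)) (hcost : cost G ω 𝒞 ≤ k)
    (C : Finset V) (hC : C ∈ 𝒞.parts) (hbig : 4 * k * c + k + c + 2 < C.card) :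
    IsFuzzyClique G (C.filter fun v => ¬(G.fuzzyNbrs v).card < c) ∧
    IsRealClique G (C.filter fun v => (G.fuzzyNbrs v).card < c) := by
  have hD : ∀ u ∈ C, ∀ v ∈ C, u ≠ v → #(C ∩ G.nonNbrs u) + #(C ∩ G.nonNbrs v) ≤ k + 1 :=
    fun u hu v hv huv => (G.card_nonNbrs_add_le_cost hω hC hu hv huv).trans (by omega)
  exact ⟨G.isFuzzyClique_filter_of_card_lt hcl h1 hD (by linarith),
    G.isRealClique_filter_of_card_le h2 h3 hD (by nlinarith)⟩
end

section
/- Let G = (V, E⁺, E⁰) be a fuzzy graph with weight function ω and let k be a nonnegative integer. Assume that every connected component of G⁽⁺⁾ contains two vertices that form a nonedge of G. Then every clustering of G of cost at most k has at most 2k clusters. -/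
open Finset

/-! A clustering of cost at most `k` has at most `2k` violated pairs counted as ordered pairs,
since every violated pair costs at least `1` in each direction. Every cluster `C` contains the
first vertex of some violated ordered pair: take a nonedge `{u, v}` in the `G⁽⁺⁾`-component of a
vertex of `C`; if both ends lie in `C` the nonedge is violated, and otherwise a path from `C`
to an end outside `C` crosses a real edge leaving `C`, which is cut. -/

theorem Finset.even_sum_offDiag {α : Type*} [DecidableEq α] (s : Finset α) (f : α → α → ℕ)
    (hf : ∀ a b, f a b = f b a) : Even (∑ p ∈ s.offDiag, f p.1 p.2) := by
  rw [← ZMod.natCast_eq_zero_iff_even, Nat.cast_sum]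
  refine sum_involution (fun p _ => p.swap) (fun p _ => ?_) (fun p hp _ => ?_)
    (fun p hp => ?_) (fun p _ => p.swap_swap)
  · rw [Prod.fst_swap, Prod.snd_swap, hf p.2 p.1, ← two_mul]
    exact mul_eq_zero_of_left rfl _
  · obtain ⟨-, -, hne⟩ := mem_offDiag.1 hp
    exact fun h => hne (congrArg Prod.snd h)
  · obtain ⟨h₁, h₂, hne⟩ := mem_offDiag.1 hp
    exact mem_offDiag.2 ⟨h₂, h₁, hne.symm⟩

theorem SimpleGraph.Reachable.exists_adj_mem_notMem {V : Type*} {H : SimpleGraph V} {u v : V}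
    (huv : H.Reachable u v) {S : Set V} (hu : u ∈ S) (hv : v ∉ S) :
    ∃ a b, H.Adj a b ∧ a ∈ S ∧ b ∉ S := by
  obtain ⟨p⟩ := huv
  obtain ⟨d, -, hd⟩ := p.exists_boundary_dart S hu hv
  exact ⟨d.fst, d.snd, d.adj, hd⟩

theorem FuzzyGraph.nonedge_comm_s13 {V : Type*} (G : FuzzyGraph V) {u v : V} :
    G.nonedge u v ↔ G.nonedge v u := by
  simp only [FuzzyGraph.nonedge, ne_comm, G.real_symm u v, G.fuzzy_symm u v]

section Clustering

variable {V : Type*} [Fintype V] [DecidableEq V] (G : FuzzyGraph V) (ω : V → V → ℕ)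
  (𝒞 : Finpartition (univ : Finset V))

theorem together_iff_part_eq {𝒞} {u v : V} : together 𝒞 u v ↔ 𝒞.part u = 𝒞.part v := by
  rw [together, ← 𝒞.mem_part_iff_exists, 𝒞.mem_part_iff_part_eq_part (mem_univ u) (mem_univ v)]

theorem together_iff_mem {𝒞} {C : Finset V} (hC : C ∈ 𝒞.parts) {u v : V} (hu : u ∈ C) :
    together 𝒞 u v ↔ v ∈ C := by
  rw [together_iff_part_eq, 𝒞.part_eq_of_mem hC hu, eq_comm, 𝒞.part_eq_iff_mem hC]

abbrev IsViolated (u v : V) : Prop :=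
  (G.real u v ∧ ¬together 𝒞 u v) ∨ (G.nonedge u v ∧ together 𝒞 u v)

def pairCost (u v : V) : ℕ :=
  (if G.real u v ∧ ¬together 𝒞 u v then ω u v else 0) +
    (if G.nonedge u v ∧ together 𝒞 u v then ω u v else 0)

theorem cost_eq_sum_pairCost_div_two :
    cost G ω 𝒞 = (∑ p ∈ univ.offDiag, pairCost G ω 𝒞 p.1 p.2) / 2 := rfl

variable {G ω}

theorem pairCost_comm (hω : IsWeight G ω) (u v : V) :
    pairCost G ω 𝒞 u v = pairCost G ω 𝒞 v u := by
  simp only [pairCost, G.real_symm u v, G.nonedge_comm_s13, together_iff_part_eq, eq_comm, hω.1 u v]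

theorem one_le_pairCost (hω : IsWeight G ω) {u v : V} (huv : u ≠ v) (h : IsViolated G 𝒞 u v) :
    1 ≤ pairCost G ω 𝒞 u v := by
  have hpos : ¬G.fuzzy u v → 1 ≤ ω u v := fun hf =>
    Nat.one_le_iff_ne_zero.2 fun h0 => hf ((hω.2 u v huv).1 h0)
  rcases h with h | h
  · rw [pairCost, if_pos h]
    exact (hpos fun hf => G.not_real_and_fuzzy u v ⟨h.1, hf⟩).trans (Nat.le_add_right _ _)
  · rw [pairCost, if_pos h]
    exact (hpos h.1.2.2).trans (Nat.le_add_left _ _)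

theorem card_violated_le_sum_pairCost (hω : IsWeight G ω) :
    #{p ∈ univ.offDiag | IsViolated G 𝒞 p.1 p.2} ≤
      ∑ p ∈ univ.offDiag, pairCost G ω 𝒞 p.1 p.2 := by
  rw [card_filter]
  refine sum_le_sum fun p hp => ?_
  split_ifs with h
  · exact one_le_pairCost 𝒞 hω (mem_offDiag.1 hp).2.2 h
  · exact Nat.zero_le _

theorem exists_violated_of_mem_parts
    (hcomp : ∀ w : V, ∃ u v : V, G.plus.Reachable w u ∧ G.plus.Reachable w v ∧ G.nonedge u v)
    {C : Finset V} (hC : C ∈ 𝒞.parts) : ∃ u ∈ C, ∃ v, u ≠ v ∧ IsViolated G 𝒞 u v := by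
  obtain ⟨w, hw⟩ := 𝒞.nonempty_of_mem_parts hC
  obtain ⟨u, v, hwu, hwv, huv⟩ := hcomp w
  have cut : ∀ x, G.plus.Reachable w x → x ∉ C → ∃ a ∈ C, ∃ b, a ≠ b ∧ IsViolated G 𝒞 a b := by
    intro x hwx hx
    obtain ⟨a, b, hab, ha, hb⟩ := hwx.exists_adj_mem_notMem (S := (C : Set V)) hw hx
    exact ⟨a, ha, b, hab.ne, .inl ⟨hab, (together_iff_mem hC ha).not.2 hb⟩⟩
  by_cases hu : u ∈ C
  · by_cases hv : v ∈ C
    · exact ⟨u, hu, v, huv.1, .inr ⟨huv, (together_iff_mem hC hu).2 hv⟩⟩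
    · exact cut v hwv hv
  · exact cut u hwu hu

theorem card_parts_le_card_violated
    (hcomp : ∀ w : V, ∃ u v : V, G.plus.Reachable w u ∧ G.plus.Reachable w v ∧ G.nonedge u v) :
    #𝒞.parts ≤ #{p ∈ univ.offDiag | IsViolated G 𝒞 p.1 p.2} := by
  refine card_le_card_of_surjOn (fun p => 𝒞.part p.1) fun C hC => ?_
  obtain ⟨u, hu, v, huv, h⟩ := exists_violated_of_mem_parts 𝒞 hcomp hC
  exact ⟨(u, v), by simpa [huv] using h, 𝒞.part_eq_of_mem hC hu⟩

end Clustering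

/-- If every connected component of `G⁽⁺⁾` contains a nonedge, then every
clustering of cost at most `k` has at most `2k` clusters. -/
theorem stmt13 {V : Type*} [Fintype V] [DecidableEq V]
    (G : FuzzyGraph V) (ω : V → V → ℕ) (hω : IsWeight G ω) (k : ℕ)
    (hcomp : ∀ w : V, ∃ u v : V, G.plus.Reachable w u ∧ G.plus.Reachable w v ∧ G.nonedge u v)
    (𝒞 : Finpartition (Finset.univ : Finset V)) (hcost : cost G ω 𝒞 ≤ k) :
    𝒞.parts.card ≤ 2 * k := by
  have hcard := card_parts_le_card_violated 𝒞 hcomp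
  have hsum := card_violated_le_sum_pairCost 𝒞 hω
  obtain ⟨t, ht⟩ := univ.even_sum_offDiag _ (pairCost_comm 𝒞 hω)
  rw [cost_eq_sum_pairCost_div_two, ht] at hcost
  omega
end

section
/- Let H = (V, E) be a finite simple graph on n vertices and let k ≤ n be a nonnegative integer. Define a fuzzy graph G' with unit weights on real edges and nonedges as follows: the vertex set is V together with one new vertex v*; the real edges of G' are exactly the pairs {u, v*} for u ∈ V; the fuzzy edges of G' are exactly the edges of H; the nonedges of G' are exactly the pairs of distinct vertices of V that are non-adjacent in H. Then H contains a clique of size at least k if and only if G' admits a clustering of cost at most n − k. -/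
open Finset

/-!
Given a clique `S`, the clustering with parts `{v*} ∪ S` and singletons pays exactly for the
`n - |S|` real edges from `v*` to `V \ S`. Conversely, let `S` be the set of vertices of `V` in
the cluster of `v*`. A clustering pays for the `n - |S|` real edges leaving that cluster and for
every nonadjacent pair of `H` inside `S`, so if it costs at most `n - k` there are at most
`|S| - k` such pairs, and deleting one endpoint of each leaves a clique of size at least `k`.
-/

section Clustering

variable {α : Type*} [Fintype α] [DecidableEq α]

lemma together_iff_part_eq_s17 (𝒞 : Finpartition (univ : Finset α)) (a b : α) :
    together 𝒞 a b ↔ 𝒞.part a = 𝒞.part b := by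
  rw [together, ← Finpartition.mem_part_iff_exists,
    𝒞.mem_part_iff_part_eq_part (mem_univ a) (mem_univ b)]

lemma exists_finpartition_together_iff {β : Type*} [DecidableEq β] (f : α → β) :
    ∃ 𝒞 : Finpartition (univ : Finset α), ∀ a b, together 𝒞 a b ↔ f a = f b := by
  refine ⟨Finpartition.ofSetoid (Setoid.ker f), fun a b => ?_⟩
  rw [together, ← Finpartition.mem_part_iff_exists, Finpartition.mem_part_ofSetoid_iff_rel,
    Setoid.ker_def, eq_comm]

def IsDisagreement (G : FuzzyGraph α) (𝒞 : Finpartition (univ : Finset α)) (a b : α) : Prop :=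
  G.real a b ∧ ¬together 𝒞 a b ∨ G.nonedge a b ∧ together 𝒞 a b

instance (G : FuzzyGraph α) (𝒞 : Finpartition (univ : Finset α)) (a b : α) :
    Decidable (IsDisagreement G 𝒞 a b) := by
  unfold IsDisagreement; infer_instance

lemma not_isDisagreement_self (G : FuzzyGraph α) (𝒞 : Finpartition (univ : Finset α)) (a : α) :
    ¬IsDisagreement G 𝒞 a a := by
  simp [IsDisagreement, FuzzyGraph.nonedge, G.real_irrefl]

lemma isDisagreement_comm (G : FuzzyGraph α) (𝒞 : Finpartition (univ : Finset α)) (a b : α) :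
    IsDisagreement G 𝒞 a b ↔ IsDisagreement G 𝒞 b a := by
  simp only [IsDisagreement, FuzzyGraph.nonedge, together_iff_part_eq_s17, G.real_symm a b,
    G.fuzzy_symm a b, ne_comm, eq_comm]

lemma cost_unitW (G : FuzzyGraph α) (𝒞 : Finpartition (univ : Finset α)) :
    cost G (unitW G) 𝒞 = (∑ a, ∑ b, if IsDisagreement G 𝒞 a b then 1 else 0) / 2 := by
  rw [cost, ← Fintype.sum_prod_type']
  congr 1
  rw [← sum_subset (subset_univ _)]
  · refine sum_congr rfl fun p _ => ?_
    have := G.not_real_and_fuzzy p.1 p.2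
    by_cases hr : G.real p.1 p.2 <;> by_cases hf : G.fuzzy p.1 p.2 <;>
      simp_all [IsDisagreement, FuzzyGraph.nonedge, unitW]
  · rintro ⟨a, b⟩ - hab
    obtain rfl : a = b := by simpa using hab
    simp [not_isDisagreement_self]

end Clustering

lemma SimpleGraph.exists_isClique_subset_two_mul_card_le {V : Type*} [DecidableEq V]
    (H : SimpleGraph V) [DecidableRel H.Adj] (S : Finset V) :
    ∃ T ⊆ S, H.IsClique (T : Set V) ∧
      2 * #S ≤ 2 * #T + #{p ∈ S.offDiag | ¬H.Adj p.1 p.2} := by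
  induction S using Finset.strongInduction with
  | H S ih =>
  by_cases hS : H.IsClique (S : Set V)
  · exact ⟨S, subset_rfl, hS, by omega⟩
  obtain ⟨u, hu, v, hv, huv, hnadj⟩ : ∃ u ∈ S, ∃ v ∈ S, u ≠ v ∧ ¬H.Adj u v := by
    simpa [SimpleGraph.IsClique, Set.Pairwise] using hS
  obtain ⟨T, hTS, hT, hcard⟩ := ih (S.erase u) (erase_ssubset hu)
  refine ⟨T, hTS.trans (erase_subset u S), hT, ?_⟩
  have hpairs : #{p ∈ (S.erase u).offDiag | ¬H.Adj p.1 p.2} + 2 ≤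
      #{p ∈ S.offDiag | ¬H.Adj p.1 p.2} := by
    calc #{p ∈ (S.erase u).offDiag | ¬H.Adj p.1 p.2} + 2
        = #(insert (u, v) (insert (v, u) {p ∈ (S.erase u).offDiag | ¬H.Adj p.1 p.2})) := by
          rw [card_insert_of_notMem, card_insert_of_notMem] <;> simp [huv]
      _ ≤ #{p ∈ S.offDiag | ¬H.Adj p.1 p.2} := by
          refine card_le_card fun p hp => ?_
          simp only [mem_insert, mem_filter, mem_offDiag, mem_erase] at hp ⊢
          rcases hp with rfl | rfl | hp
          · exact ⟨⟨hu, hv, huv⟩, hnadj⟩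
          · exact ⟨⟨hv, hu, huv.symm⟩, fun h => hnadj h.symm⟩
          · exact ⟨⟨hp.1.1.2, hp.1.2.1.2, hp.1.2.2⟩, hp.2⟩
  have := card_erase_add_one hu
  omega

/-- The fuzzy graph `G'` of the reduction from Clique, with `none` playing the vertex `v*`. -/
def IsCliqueReduction {V : Type*} (H : SimpleGraph V) (G' : FuzzyGraph (Option V)) : Prop :=
  (∀ a b : Option V, G'.real a b ↔ ((a = none ∧ b ≠ none) ∨ (b = none ∧ a ≠ none))) ∧
    ∀ u v : V, G'.fuzzy (some u) (some v) ↔ H.Adj u v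

namespace IsCliqueReduction

variable {V : Type*} [Fintype V] [DecidableEq V] {H : SimpleGraph V}
  {G' : FuzzyGraph (Option V)} (𝒞 : Finpartition (univ : Finset (Option V)))

lemma isDisagreement_none_some (hG : IsCliqueReduction H G') (v : V) :
    IsDisagreement G' 𝒞 none (some v) ↔ ¬together 𝒞 none (some v) := by
  simp [IsDisagreement, FuzzyGraph.nonedge, hG.1]

lemma isDisagreement_some_some (hG : IsCliqueReduction H G') (u v : V) :
    IsDisagreement G' 𝒞 (some u) (some v) ↔
      u ≠ v ∧ ¬H.Adj u v ∧ together 𝒞 (some u) (some v) := by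
  simp [IsDisagreement, FuzzyGraph.nonedge, hG.1, hG.2, and_assoc]

lemma cost_eq [DecidableRel H.Adj] (hG : IsCliqueReduction H G') :
    cost G' (unitW G') 𝒞 = #{v | ¬together 𝒞 none (some v)} +
      #{p : V × V | p.1 ≠ p.2 ∧ ¬H.Adj p.1 p.2 ∧ together 𝒞 (some p.1) (some p.2)} / 2 := by
  have hsome_none (u : V) : IsDisagreement G' 𝒞 (some u) none ↔ ¬together 𝒞 none (some u) := by
    rw [isDisagreement_comm, hG.isDisagreement_none_some]
  simp only [cost_unitW, Fintype.sum_option, if_neg (not_isDisagreement_self G' 𝒞 _),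
    hG.isDisagreement_none_some, hsome_none, hG.isDisagreement_some_some]
  rw [sum_add_distrib, ← Fintype.sum_prod_type', sum_boole, sum_boole]
  simp only [Nat.cast_id]
  omega

lemma exists_cost_eq_of_isClique [DecidableRel H.Adj] (hG : IsCliqueReduction H G')
    {S : Finset V} (hS : H.IsClique (S : Set V)) :
    ∃ 𝒞, cost G' (unitW G') 𝒞 = Fintype.card V - #S := by
  -- the parts are `insert none (S.map some)` and singletons
  obtain ⟨𝒞, h𝒞⟩ := exists_finpartition_together_iff fun a : Option V => a.filter (· ∉ S)
  refine ⟨𝒞, ?_⟩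
  have hnone (v : V) : together 𝒞 none (some v) ↔ v ∈ S := by
    by_cases hv : v ∈ S <;> simp [h𝒞, Option.filter_some, hv]
  have hsome (u v : V) : ¬(u ≠ v ∧ ¬H.Adj u v ∧ together 𝒞 (some u) (some v)) := by
    rintro ⟨huv, hnadj, htog⟩
    have : u ∈ S ∧ v ∈ S := by
      by_cases hu : u ∈ S <;> by_cases hv : v ∈ S <;> simp_all [Option.filter_some]
    exact hnadj (hS this.1 this.2 huv)
  simp [hG.cost_eq, hnone, hsome, filter_not, card_univ_sdiff]

lemma exists_isClique_of_cost_le [DecidableRel H.Adj] (hG : IsCliqueReduction H G')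
    {k : ℕ} (hk : k ≤ Fintype.card V) (hcost : cost G' (unitW G') 𝒞 ≤ Fintype.card V - k) :
    ∃ T : Finset V, k ≤ #T ∧ H.IsClique (T : Set V) := by
  rw [hG.cost_eq] at hcost
  set S : Finset V := {v | together 𝒞 none (some v)}
  obtain ⟨T, -, hT, hST⟩ := H.exists_isClique_subset_two_mul_card_le S
  have hpairs : #{p ∈ S.offDiag | ¬H.Adj p.1 p.2} ≤
      #{p : V × V | p.1 ≠ p.2 ∧ ¬H.Adj p.1 p.2 ∧ together 𝒞 (some p.1) (some p.2)} := by
    refine card_le_card fun p hp => ?_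
    simp only [S, mem_filter, mem_offDiag, mem_univ, true_and, together_iff_part_eq_s17] at hp ⊢
    exact ⟨hp.1.2.2, hp.2, hp.1.1.symm.trans hp.1.2.1⟩
  have hS : #S + #{v | ¬together 𝒞 none (some v)} = Fintype.card V :=
    card_filter_add_card_filter_not _
  exact ⟨T, by omega, hT⟩

end IsCliqueReduction

/-- Reduction from Clique to Correlation Clustering: `H` has a clique of size
at least `k` iff the fuzzy graph `G'` on `V ∪ {v*}` — whose real edges join `v*` to all of
`V`, whose fuzzy edges are the edges of `H`, and whose nonedges are the non-adjacent pairs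
of `H` — admits a clustering of cost at most `n − k`. -/
theorem stmt17 {V : Type*} [Fintype V] [DecidableEq V]
    (H : SimpleGraph V) [DecidableRel H.Adj] (k : ℕ) (hk : k ≤ Fintype.card V)
    (G' : FuzzyGraph (Option V))
    (hreal : ∀ a b : Option V,
      G'.real a b ↔ ((a = none ∧ b ≠ none) ∨ (b = none ∧ a ≠ none)))
    (hfuzzy : ∀ u v : V, G'.fuzzy (some u) (some v) ↔ H.Adj u v) :
    (∃ S : Finset V, k ≤ S.card ∧ ∀ u ∈ S, ∀ v ∈ S, u ≠ v → H.Adj u v) ↔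
    (∃ 𝒞 : Finpartition (Finset.univ : Finset (Option V)),
      cost G' (unitW G') 𝒞 ≤ Fintype.card V - k) := by
  have hG : IsCliqueReduction H G' := ⟨hreal, hfuzzy⟩
  constructor
  · rintro ⟨S, hkS, hS⟩
    obtain ⟨𝒞, h𝒞⟩ := hG.exists_cost_eq_of_isClique (S := S) fun u hu v hv => hS u hu v hv
    exact ⟨𝒞, by omega⟩
  · rintro ⟨𝒞, h𝒞⟩
    obtain ⟨T, hkT, hT⟩ := hG.exists_isClique_of_cost_le 𝒞 hk h𝒞
    exact ⟨T, hkT, fun u hu v hv => hT hu hv⟩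
end
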